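/- arXiv:2604.19727 — 4 statements merged into one kernel-verified Lean document; each statement's English description precedes it below -/
import Mathlib

section
/- For the path P_t on t ≥ 2 vertices, f_o(P_t) ≥ t/2; that is, every path on at least 2 vertices contains an induced subgraph on at least half of its vertices in which every vertex has odd degree. -/
open Classical in
/-- Degree of `v` within the subgraph of `G` induced by the finite vertex set `s`. -/
noncomputable def indDeg {V : Type*} (G : SimpleGraph V) (s : Finset V) (v : V) : ℕ :=
  (s.filter (fun w => G.Adj v w)).card

/-- `s` induces a subgraph of `G` in which every vertex has odd degree. -/
def IsOddSet {V : Type*} (G : SimpleGraph V) (s : Finset V) : Prop :=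
  ∀ v ∈ s, Odd (indDeg G s v)

/-- `f_o(G)`: maximum order of an induced subgraph with all degrees odd. -/
noncomputable def fo {V : Type*} (G : SimpleGraph V) : ℕ :=
  sSup {n | ∃ s : Finset V, IsOddSet G s ∧ s.card = n}

/-- The predicate describing our odd set inside the path on `t` vertices. -/
def pathP (t i : ℕ) : Prop :=
  (i % 4 < 2 ∧ (t % 4 = 1 → i + 1 < t)) ∨ (t % 4 = 1 ∧ t ≤ i + 2)

instance {t i : ℕ} : Decidable (pathP t i) := by unfold pathP; infer_instance

/-- The partner (unique neighbor within the set) of vertex `i`. -/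
def pathPartner (t i : ℕ) : ℕ :=
  if t % 4 = 1 ∧ t ≤ i + 2 then (if i = t - 1 then t - 2 else t - 1)
  else (if i % 2 = 0 then i + 1 else i - 1)

lemma partner_lt {t i : ℕ} (ht : 2 ≤ t) (hi : i < t) (hp : pathP t i) :
    pathPartner t i < t := by
  unfold pathP at hp; unfold pathPartner
  split_ifs <;> omega

lemma partner_mem {t i : ℕ} (ht : 2 ≤ t) (hi : i < t) (hp : pathP t i) :
    pathP t (pathPartner t i) := by
  unfold pathP at hp ⊢; unfold pathPartner
  split_ifs <;> omega

lemma partner_adj {t i : ℕ} (ht : 2 ≤ t) (hi : i < t) (hp : pathP t i) :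
    i + 1 = pathPartner t i ∨ pathPartner t i + 1 = i := by
  unfold pathP at hp; unfold pathPartner
  split_ifs <;> omega

lemma partner_unique {t i : ℕ} (ht : 2 ≤ t) (hi : i < t) (hp : pathP t i)
    {j : ℕ} (hj : j < t) (hpj : pathP t j) (hadj : i + 1 = j ∨ j + 1 = i) :
    j = pathPartner t i := by
  unfold pathP at hp hpj; unfold pathPartner
  split_ifs <;> omega

lemma count_lemma : ∀ n : ℕ,
    ((Finset.range n).filter (fun i => i % 4 < 2)).card = (n + 3) / 4 + (n + 2) / 4 := by
  intro n
  induction n with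
  | zero => simp
  | succ n ih =>
    rw [Finset.range_add_one, Finset.filter_insert]
    split_ifs with h
    · rw [Finset.card_insert_of_notMem (by simp)]
      omega
    · omega

lemma key (t : ℕ) (ht : 2 ≤ t) :
    ∃ s : Finset (Fin t), IsOddSet (SimpleGraph.pathGraph t) s ∧ t ≤ 2 * s.card := by
  classical
  refine ⟨Finset.univ.filter (fun v : Fin t => pathP t v.val), ?_, ?_⟩
  · intro v hv
    simp only [Finset.mem_filter, Finset.mem_univ, true_and] at hv
    have h1 : partner_lt ht v.isLt hv = partner_lt ht v.isLt hv := rfl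
    set w₀ : Fin t := ⟨pathPartner t v.val, partner_lt ht v.isLt hv⟩ with hw₀
    have hfilter : ((Finset.univ.filter (fun v : Fin t => pathP t v.val)).filter
        (fun w => (SimpleGraph.pathGraph t).Adj v w)) = {w₀} := by
      apply Finset.eq_singleton_iff_unique_mem.mpr
      constructor
      · simp only [Finset.mem_filter, Finset.mem_univ, true_and, SimpleGraph.pathGraph_adj]
        exact ⟨partner_mem ht v.isLt hv, partner_adj ht v.isLt hv⟩
      · intro w hw
        simp only [Finset.mem_filter, Finset.mem_univ, true_and,
          SimpleGraph.pathGraph_adj] at hw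
        exact Fin.ext (partner_unique ht v.isLt hv w.isLt hw.1 hw.2)
    unfold indDeg
    rw [Finset.filter_congr_decidable] at *
    rw [hfilter, Finset.card_singleton]
    exact odd_one
  · have himg : (Finset.univ.filter (fun v : Fin t => pathP t v.val)).image Fin.val =
        (Finset.range t).filter (pathP t) := by
      ext j
      simp only [Finset.mem_image, Finset.mem_filter, Finset.mem_univ, true_and,
        Finset.mem_range]
      constructor
      · rintro ⟨v, hv, rfl⟩; exact ⟨v.isLt, hv⟩
      · rintro ⟨hj, hp⟩; exact ⟨⟨j, hj⟩, hp, rfl⟩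
    have hcard : (Finset.univ.filter (fun v : Fin t => pathP t v.val)).card =
        ((Finset.range t).filter (pathP t)).card := by
      rw [← himg, Finset.card_image_of_injective _ Fin.val_injective]
    rw [hcard]
    by_cases h1 : t % 4 = 1
    · -- split the filter as a disjoint union
      have hsplit : (Finset.range t).filter (pathP t) =
          ((Finset.range (t - 1)).filter (fun i => i % 4 < 2)) ∪ {t - 2, t - 1} := by
        ext j
        simp only [Finset.mem_filter, Finset.mem_range, Finset.mem_union, Finset.mem_insert,
          Finset.mem_singleton, pathP]
        omega
      have hdisj : Disjoint ((Finset.range (t - 1)).filter (fun i => i % 4 < 2))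
          ({t - 2, t - 1} : Finset ℕ) := by
        simp only [Finset.disjoint_left, Finset.mem_filter, Finset.mem_range,
          Finset.mem_insert, Finset.mem_singleton]
        omega
      rw [hsplit, Finset.card_union_of_disjoint hdisj, count_lemma]
      have h2 : ({t - 2, t - 1} : Finset ℕ).card = 2 := by
        rw [Finset.card_insert_of_notMem (by simp; omega), Finset.card_singleton]
      rw [h2]
      omega
    · have heq : (Finset.range t).filter (pathP t) =
          (Finset.range t).filter (fun i => i % 4 < 2) := by
        ext j
        simp only [Finset.mem_filter, Finset.mem_range, pathP]
        omega
      rw [heq, count_lemma]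
      omega

/-- For t ≥ 2, `f_o(P_t) ≥ t/2`. -/
theorem stmt_4 (t : ℕ) (ht : 2 ≤ t) :
    (t : ℚ) / 2 ≤ (fo (SimpleGraph.pathGraph t) : ℚ) := by
  obtain ⟨s, hodd, hcard⟩ := key t ht
  have hbdd : BddAbove {n | ∃ s' : Finset (Fin t),
      IsOddSet (SimpleGraph.pathGraph t) s' ∧ s'.card = n} := by
    refine ⟨t, ?_⟩
    rintro n ⟨s', -, rfl⟩
    simpa using Finset.card_le_univ s'
  have hmem : s.card ∈ {n | ∃ s' : Finset (Fin t),
      IsOddSet (SimpleGraph.pathGraph t) s' ∧ s'.card = n} := ⟨s, hodd, rfl⟩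
  have hfo : s.card ≤ fo (SimpleGraph.pathGraph t) := le_csSup hbdd hmem
  have ht2 : t ≤ 2 * fo (SimpleGraph.pathGraph t) := le_trans hcard (by omega)
  rw [div_le_iff₀ (by norm_num : (0:ℚ) < 2)]
  exact_mod_cast (by omega : t ≤ fo (SimpleGraph.pathGraph t) * 2)
end

section
/- For the path P_t on t ≥ 5 vertices, f_o(P_t) ≥ 2 + f_o(P_{t-3}). -/
/-! Shift a maximum odd set of `P_n` three places to the right and add the edge `v₁v₂`. The
skipped vertex `v₃` separates the two parts, so no induced degree changes and the result is an odd
set of `P_{n+3}` with two more vertices. -/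

section

variable {V W : Type*} {G : SimpleGraph V}

theorem indDeg_map {H : SimpleGraph W} (f : G ↪g H) (s : Finset V) (v : V) :
    indDeg H (s.map f.toEmbedding) (f v) = indDeg G s v := by
  classical
  unfold indDeg
  rw [← Finset.card_map f.toEmbedding]
  congr 1
  ext w
  simp only [Finset.mem_filter, Finset.mem_map]
  constructor
  · rintro ⟨⟨a, ha, rfl⟩, hadj⟩
    exact ⟨a, ⟨ha, f.map_adj_iff.mp hadj⟩, rfl⟩
  · rintro ⟨a, ⟨ha, hadj⟩, rfl⟩
    exact ⟨⟨a, ha, rfl⟩, f.map_adj_iff.mpr hadj⟩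

theorem indDeg_union_of_mem_left [DecidableEq V] {s u : Finset V}
    (hsep : ∀ v ∈ s, ∀ w ∈ u, ¬G.Adj v w) {v : V} (hv : v ∈ s) :
    indDeg G (s ∪ u) v = indDeg G s v := by
  classical
  unfold indDeg
  rw [Finset.filter_union, Finset.filter_false_of_mem (fun w hw => hsep v hv w hw),
    Finset.union_empty]

namespace IsOddSet

theorem map {H : SimpleGraph W} (f : G ↪g H) {s : Finset V} (hs : IsOddSet G s) :
    IsOddSet H (s.map f.toEmbedding) := by
  intro w hw
  obtain ⟨v, hv, rfl⟩ := Finset.mem_map.mp hw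
  exact (indDeg_map f s v).symm ▸ hs v hv

theorem union [DecidableEq V] {s u : Finset V} (hs : IsOddSet G s) (hu : IsOddSet G u)
    (hsep : ∀ v ∈ s, ∀ w ∈ u, ¬G.Adj v w) : IsOddSet G (s ∪ u) := by
  intro v hv
  rcases Finset.mem_union.mp hv with hv | hv
  · rw [indDeg_union_of_mem_left hsep hv]
    exact hs v hv
  · rw [Finset.union_comm,
      indDeg_union_of_mem_left (fun w hw x hx h => hsep x hx w hw h.symm) hv]
    exact hu v hv

theorem pair [DecidableEq V] {a b : V} (h : G.Adj a b) : IsOddSet G {a, b} := by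
  intro v hv
  rcases Finset.mem_insert.mp hv with rfl | hv
  · simp [indDeg, Finset.filter_insert, Finset.filter_singleton, h]
  · rw [Finset.mem_singleton.mp hv]
    simp [indDeg, Finset.filter_insert, Finset.filter_singleton, h.symm]

end IsOddSet

end

theorem bddAbove_isOddSet_card {V : Type*} [Finite V] (G : SimpleGraph V) :
    BddAbove {n | ∃ s : Finset V, IsOddSet G s ∧ s.card = n} := by
  have := Fintype.ofFinite V
  refine ⟨Fintype.card V, ?_⟩
  rintro n ⟨s, -, rfl⟩
  exact s.card_le_univ

theorem exists_isOddSet_card_eq_fo {V : Type*} [Finite V] (G : SimpleGraph V) :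
    ∃ s : Finset V, IsOddSet G s ∧ s.card = fo G := by
  have hne : {n | ∃ s : Finset V, IsOddSet G s ∧ s.card = n}.Nonempty :=
    ⟨0, ∅, by simp [IsOddSet]⟩
  exact Nat.sSup_mem hne (bddAbove_isOddSet_card G)

theorem IsOddSet.card_le_fo {V : Type*} [Finite V] {G : SimpleGraph V} {s : Finset V}
    (hs : IsOddSet G s) : s.card ≤ fo G :=
  le_csSup (bddAbove_isOddSet_card G) ⟨s, hs, rfl⟩

namespace SimpleGraph

open Finset

def pathGraph.addNatEmbedding (n k : ℕ) : pathGraph n ↪g pathGraph (n + k) where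
  toEmbedding := Fin.addNatEmb k
  map_rel_iff' := by
    intro a b
    simp only [Fin.addNatEmb_apply, pathGraph_adj, Fin.val_addNat]
    omega

theorem two_add_fo_pathGraph_le (n : ℕ) :
    2 + fo (pathGraph n) ≤ fo (pathGraph (n + 3)) := by
  obtain ⟨s, hs, hcard⟩ := exists_isOddSet_card_eq_fo (pathGraph n)
  let e := pathGraph.addNatEmbedding n 3
  let edge : Finset (Fin (n + 3)) := {⟨0, by omega⟩, ⟨1, by omega⟩}
  have hsep : ∀ v ∈ edge, ∀ w ∈ s.map e.toEmbedding, ¬(pathGraph (n + 3)).Adj v w := by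
    simp [edge, e, pathGraph.addNatEmbedding, pathGraph_adj]
  have hodd : IsOddSet (pathGraph (n + 3)) (edge ∪ s.map e.toEmbedding) :=
    (IsOddSet.pair (by simp [pathGraph_adj])).union (hs.map e) hsep
  have hdisj : Disjoint edge (s.map e.toEmbedding) := by
    simp [edge, e, pathGraph.addNatEmbedding, Fin.ext_iff]
  calc 2 + fo (pathGraph n) = (edge ∪ s.map e.toEmbedding).card := by
        rw [card_union_of_disjoint hdisj, card_map, hcard]; simp [edge]
    _ ≤ fo (pathGraph (n + 3)) := hodd.card_le_fo

end SimpleGraph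

/-- For t ≥ 5, `f_o(P_t) ≥ 2 + f_o(P_{t-3})`. -/
theorem stmt_5 (t : ℕ) (ht : 5 ≤ t) :
    2 + fo (SimpleGraph.pathGraph (t - 3)) ≤ fo (SimpleGraph.pathGraph t) := by
  obtain ⟨n, rfl⟩ : ∃ n, t = n + 3 := ⟨t - 3, by omega⟩
  rw [Nat.add_sub_cancel]
  exact SimpleGraph.two_add_fo_pathGraph_le n
end

section
/- Suppose every graph without isolated vertices satisfies the weighted Scott lemma: every k-chromatic graph G without isolated vertices contains, for each 2 ≤ m ≤ k, an induced m-chromatic subgraph H without isolated vertices with |V(H)| ≥ (m/k)|V(G)|. Then every claw-free graph G without isolated vertices satisfies f_o(G) ≥ |V(G)|/χ(G). -/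
open Finset

section

open Classical

variable {V : Type*} {G : SimpleGraph V}

theorem adj_or_adj_or_adj_of_isEmpty_claw
    (hclaw : IsEmpty (completeBipartiteGraph (Fin 1) (Fin 3) ↪g G)) {v a b c : V}
    (ha : G.Adj v a) (hb : G.Adj v b) (hc : G.Adj v c) (hab : a ≠ b) (hac : a ≠ c) (hbc : b ≠ c) :
    G.Adj a b ∨ G.Adj a c ∨ G.Adj b c := by
  by_contra! ⟨nab, nac, nbc⟩
  refine hclaw.false ⟨⟨Sum.elim (fun _ => v) ![a, b, c], ?_⟩, ?_⟩
  · rintro (i | i) (j | j) <;> fin_cases i <;> (try fin_cases j) <;>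
      simp [ha.ne, hb.ne, hc.ne, ha.ne', hb.ne', hc.ne', hab, hac, hbc, hab.symm, hac.symm,
        hbc.symm]
  · rintro (i | i) (j | j) <;> fin_cases i <;> (try fin_cases j) <;>
      simp [DFunLike.coe, ha, hb, hc, ha.symm, hb.symm, hc.symm, nab, nac, nbc, G.adj_comm b a,
        G.adj_comm c a, G.adj_comm c b]

variable (G) in
noncomputable def nbrsIn (s : Finset V) (v : V) : Finset V :=
  s.filter (G.Adj v)

@[simp]
theorem mem_nbrsIn {s : Finset V} {v w : V} : w ∈ nbrsIn G s v ↔ w ∈ s ∧ G.Adj v w :=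
  mem_filter

theorem indDeg_eq_card_nbrsIn (s : Finset V) (v : V) : indDeg G s v = (nbrsIn G s v).card :=
  rfl

theorem indDeg_mono {s t : Finset V} (hst : s ⊆ t) (v : V) : indDeg G s v ≤ indDeg G t v :=
  card_le_card (filter_subset_filter _ hst)

theorem two_lt_indDeg {s : Finset V} {v a b c : V} (ha : a ∈ s) (hb : b ∈ s) (hc : c ∈ s)
    (hva : G.Adj v a) (hvb : G.Adj v b) (hvc : G.Adj v c) (hab : a ≠ b) (hac : a ≠ c)
    (hbc : b ≠ c) : 2 < indDeg G s v :=
  two_lt_card.2 ⟨a, mem_nbrsIn.2 ⟨ha, hva⟩, b, mem_nbrsIn.2 ⟨hb, hvb⟩, c, mem_nbrsIn.2 ⟨hc, hvc⟩,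
    hab, hac, hbc⟩

theorem exists_nbrsIn_eq_pair {s : Finset V} {u v : V} (hu : indDeg G s u = 2)
    (hv : v ∈ nbrsIn G s u) : ∃ w, nbrsIn G s u = {v, w} := by
  obtain ⟨w, hw⟩ := card_eq_one.1 (by rw [card_erase_of_mem hv, ← indDeg_eq_card_nbrsIn, hu])
  exact ⟨w, by rw [← insert_erase hv, hw]⟩

/-- The neighbours of `v` in `s` all have the colour opposite to `v`, so no two are adjacent. -/
theorem indDeg_le_two_of_isEmpty_claw
    (hclaw : IsEmpty (completeBipartiteGraph (Fin 1) (Fin 3) ↪g G)) {c : V → Fin 2}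
    {s : Finset V} (hc : ∀ a ∈ s, ∀ b ∈ s, G.Adj a b → c a ≠ c b) {v : V} (hv : v ∈ s) :
    indDeg G s v ≤ 2 := by
  by_contra! h
  rw [indDeg_eq_card_nbrsIn] at h
  obtain ⟨a, ha, b, hb, d, hd, hab, had, hbd⟩ := two_lt_card.1 h
  rw [mem_nbrsIn] at ha hb hd
  have hca := hc v hv a ha.1 ha.2
  have hcb := hc v hv b hb.1 hb.2
  have hcd := hc v hv d hd.1 hd.2
  rcases adj_or_adj_or_adj_of_isEmpty_claw hclaw ha.2 hb.2 hd.2 hab had hbd with h | h | h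
  · exact hc a ha.1 b hb.1 h (by omega)
  · exact hc a ha.1 d hd.1 h (by omega)
  · exact hc b hb.1 d hd.1 h (by omega)

theorem not_fiveCycle_of_proper {c : V → Fin 2} {s : Finset V}
    (hc : ∀ a ∈ s, ∀ b ∈ s, G.Adj a b → c a ≠ c b) {u v w x y : V} (hu : u ∈ s) (hv : v ∈ s)
    (hw : w ∈ s) (hx : x ∈ s) (hy : y ∈ s) :
    ¬(G.Adj u v ∧ G.Adj v x ∧ G.Adj x y ∧ G.Adj y w ∧ G.Adj w u) := by
  rintro ⟨huv, hvx, hxy, hyw, hwu⟩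
  have := hc u hu v hv huv
  have := hc v hv x hx hvx
  have := hc x hx y hy hxy
  have := hc y hy w hw hyw
  have := hc w hw u hu hwu
  omega

variable (G) in
def IsInducedMatching (t : Finset V) : Prop :=
  ∀ v ∈ t, indDeg G t v = 1

theorem IsInducedMatching.isOddSet {t : Finset V} (ht : IsInducedMatching G t) : IsOddSet G t :=
  fun v hv => ht v hv ▸ odd_one

theorem IsInducedMatching.insert_edge {t : Finset V} (ht : IsInducedMatching G t) {u v : V}
    (huv : G.Adj u v) (hsep : ∀ y ∈ t, ¬G.Adj y u ∧ ¬G.Adj y v) :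
    IsInducedMatching G (insert u (insert v t)) := by
  have hu : ∀ y ∈ t, ¬G.Adj u y := fun y hy h => (hsep y hy).1 h.symm
  have hv : ∀ y ∈ t, ¬G.Adj v y := fun y hy h => (hsep y hy).2 h.symm
  intro y hy
  simp only [indDeg_eq_card_nbrsIn, nbrsIn, filter_insert]
  rcases mem_insert.1 hy with rfl | hy
  · simp [huv, filter_false_of_mem hu]
  rcases mem_insert.1 hy with rfl | hy
  · simp [huv.symm, filter_false_of_mem hv]
  · simpa [(hsep y hy).1, (hsep y hy).2, indDeg_eq_card_nbrsIn, nbrsIn] using ht y hy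

theorem card_insert_insert_of_adj {t : Finset V} {u v : V}
    (huv : G.Adj u v) (hsep : ∀ y ∈ t, ¬G.Adj y u ∧ ¬G.Adj y v) :
    (insert u (insert v t)).card = t.card + 2 := by
  have hut : u ∉ t := fun hu => (hsep u hu).2 huv
  have hvt : v ∉ t := fun hv => (hsep v hv).1 huv.symm
  rw [card_insert_of_notMem (by simp [huv.ne, hut]), card_insert_of_notMem hvt]

variable (G) in
noncomputable def isolatedIn (s : Finset V) : Finset V :=
  s.filter fun y => ¬∃ z ∈ s, G.Adj y z

variable (G) in
noncomputable def nonIsolatedIn (s : Finset V) : Finset V :=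
  s.filter fun y => ∃ z ∈ s, G.Adj y z

theorem card_nonIsolatedIn_add_card_isolatedIn (s : Finset V) :
    (nonIsolatedIn G s).card + (isolatedIn G s).card = s.card :=
  card_filter_add_card_filter_not _

theorem nonIsolatedIn_subset (s : Finset V) : nonIsolatedIn G s ⊆ s :=
  filter_subset _ _

theorem exists_adj_of_mem_nonIsolatedIn {s : Finset V} {y : V} (hy : y ∈ nonIsolatedIn G s) :
    ∃ z ∈ nonIsolatedIn G s, G.Adj y z := by
  obtain ⟨hys, z, hzs, hyz⟩ := mem_filter.1 hy
  exact ⟨z, mem_filter.2 ⟨hzs, y, hys, hyz.symm⟩, hyz⟩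

variable (G) in
structure InducesPathsAndEvenCycles (c : V → Fin 2) (s : Finset V) : Prop where
  proper : ∀ a ∈ s, ∀ b ∈ s, G.Adj a b → c a ≠ c b
  indDeg_le_two : ∀ v ∈ s, indDeg G s v ≤ 2
  exists_adj : ∀ v ∈ s, ∃ w ∈ s, G.Adj v w

theorem InducesPathsAndEvenCycles.nonIsolatedIn_of_subset {c : V → Fin 2} {s t : Finset V}
    (h : InducesPathsAndEvenCycles G c s) (hts : t ⊆ s) :
    InducesPathsAndEvenCycles G c (nonIsolatedIn G t) where
  proper a ha b hb :=
    h.proper a (hts (nonIsolatedIn_subset t ha)) b (hts (nonIsolatedIn_subset t hb))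
  indDeg_le_two v hv :=
    (indDeg_mono ((nonIsolatedIn_subset t).trans hts) v).trans
      (h.indDeg_le_two v (hts (nonIsolatedIn_subset t hv)))
  exists_adj _ := exists_adj_of_mem_nonIsolatedIn

variable (G) in
/-- Adding the edge `uv` to an induced matching forces deleting `D` and then the vertices of
`s \ D` left isolated; the cut is cheap when this costs at most four vertices of `s`. -/
structure IsCheapCut (s D : Finset V) (u v : V) : Prop where
  adj : G.Adj u v
  left_mem : u ∈ s
  right_mem : v ∈ s
  nbrsIn_left_subset : nbrsIn G s u ⊆ D
  nbrsIn_right_subset : nbrsIn G s v ⊆ D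
  card_le : D.card + (isolatedIn G (s \ D)).card ≤ 4

theorem card_isolatedIn_sdiff_le_one_of_leaf {s : Finset V}
    (hdeg : ∀ v ∈ s, indDeg G s v ≤ 2) (hiso : ∀ v ∈ s, ∃ w ∈ s, G.Adj v w) {u v : V}
    (hu : u ∈ s) (hNu : nbrsIn G s u = {v}) :
    (isolatedIn G (s \ insert v (nbrsIn G s v))).card ≤ 1 := by
  have hv : v ∈ s ∧ G.Adj u v := mem_nbrsIn.1 (hNu ▸ mem_singleton_self v)
  have huNv : u ∈ nbrsIn G s v := mem_nbrsIn.2 ⟨hu, hv.2.symm⟩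
  have hNv : (nbrsIn G s v).card ≤ 2 := hdeg v hv.1
  set D := insert v (nbrsIn G s v)
  have hE : ((nbrsIn G s v).erase u).card ≤ 1 := by
    rw [card_erase_of_mem huNv]
    omega
  have hisoE : ∀ y ∈ isolatedIn G (s \ D),
      y ∈ s ∧ y ∉ D ∧ ∃ z ∈ (nbrsIn G s v).erase u, G.Adj y z := by
    intro y hy
    simp only [isolatedIn, mem_filter, mem_sdiff, not_exists, not_and] at hy
    obtain ⟨⟨hys, hyD⟩, hyiso⟩ := hy
    obtain ⟨z, hzs, hyz⟩ := hiso y hys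
    have hzD : z ∈ D := by_contra fun h => hyiso z ⟨hzs, h⟩ hyz
    refine ⟨hys, hyD, z, mem_erase.2 ⟨?_, ?_⟩, hyz⟩
    · rintro rfl
      have hyv : y ∈ nbrsIn G s z := mem_nbrsIn.2 ⟨hys, hyz.symm⟩
      rw [hNu, mem_singleton] at hyv
      exact hyD (hyv ▸ mem_insert_self _ _)
    · rcases mem_insert.1 hzD with rfl | h
      · exact absurd (mem_insert_of_mem (mem_nbrsIn.2 ⟨hys, hyz.symm⟩)) hyD
      · exact h
  -- two isolated vertices would both be adjacent to the other neighbour of `v`, of degree `≤ 2`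
  refine card_le_one.2 fun y₁ hy₁ y₂ hy₂ => by_contra fun hne => ?_
  obtain ⟨hy₁s, hy₁D, z, hz, hy₁z⟩ := hisoE y₁ hy₁
  obtain ⟨hy₂s, hy₂D, z', hz', hy₂z⟩ := hisoE y₂ hy₂
  obtain rfl := card_le_one.1 hE z hz z' hz'
  have hzv := mem_nbrsIn.1 (mem_of_mem_erase hz)
  have hvD : v ∈ D := mem_insert_self _ _
  exact (hdeg z hzv.1).not_gt <| two_lt_indDeg hv.1 hy₁s hy₂s hzv.2.symm hy₁z.symm hy₂z.symm
    (ne_of_mem_of_not_mem hvD hy₁D) (ne_of_mem_of_not_mem hvD hy₂D) hne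

theorem exists_isCheapCut_of_indDeg_eq_one {s : Finset V}
    (hdeg : ∀ v ∈ s, indDeg G s v ≤ 2) (hiso : ∀ v ∈ s, ∃ w ∈ s, G.Adj v w) {u : V}
    (hu : u ∈ s) (hleaf : indDeg G s u = 1) : ∃ v D, IsCheapCut G s D u v := by
  rw [indDeg_eq_card_nbrsIn] at hleaf
  obtain ⟨v, hNu⟩ := card_eq_one.1 hleaf
  have hv : v ∈ s ∧ G.Adj u v := mem_nbrsIn.1 (hNu ▸ mem_singleton_self v)
  refine ⟨v, insert v (nbrsIn G s v), hv.2, hu, hv.1, ?_, subset_insert _ _, ?_⟩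
  · rw [hNu]
    exact singleton_subset_iff.2 (mem_insert_self _ _)
  · have hNv : (nbrsIn G s v).card ≤ 2 := hdeg v hv.1
    have := card_insert_le v (nbrsIn G s v)
    have := card_isolatedIn_sdiff_le_one_of_leaf hdeg hiso hu hNu
    omega

theorem isolatedIn_sdiff_eq_empty_of_indDeg_eq_two {c : V → Fin 2} {s : Finset V}
    (hc : ∀ a ∈ s, ∀ b ∈ s, G.Adj a b → c a ≠ c b) (hreg : ∀ v ∈ s, indDeg G s v = 2)
    {u v w x : V} (hu : u ∈ s) (hNu : nbrsIn G s u = {v, w}) (hNv : nbrsIn G s v = {u, x}) :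
    isolatedIn G (s \ {u, v, w, x}) = ∅ := by
  have hv := mem_nbrsIn.1 (hNu ▸ (by simp) : v ∈ nbrsIn G s u)
  have hw := mem_nbrsIn.1 (hNu ▸ (by simp) : w ∈ nbrsIn G s u)
  have hx := mem_nbrsIn.1 (hNv ▸ (by simp) : x ∈ nbrsIn G s v)
  have hNuD : nbrsIn G s u ⊆ {u, v, w, x} := by simp [hNu, insert_subset_iff]
  have hNvD : nbrsIn G s v ⊆ {u, v, w, x} := by simp [hNv, insert_subset_iff]
  refine eq_empty_of_forall_notMem fun y hy => ?_
  simp only [isolatedIn, mem_filter, mem_sdiff, not_exists, not_and] at hy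
  obtain ⟨⟨hys, hyD⟩, hyiso⟩ := hy
  have hNy : nbrsIn G s y ⊆ {w, x} := by
    intro z hz
    obtain ⟨hzs, hyz⟩ := mem_nbrsIn.1 hz
    have hzD : z ∈ ({u, v, w, x} : Finset V) := by_contra fun h => hyiso z ⟨hzs, h⟩ hyz
    have hzu : z ≠ u := by
      rintro rfl
      exact hyD (hNuD (mem_nbrsIn.2 ⟨hys, hyz.symm⟩))
    have hzv : z ≠ v := by
      rintro rfl
      exact hyD (hNvD (mem_nbrsIn.2 ⟨hys, hyz.symm⟩))
    simp only [mem_insert, mem_singleton] at hzD ⊢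
    tauto
  have hNy' : nbrsIn G s y = {w, x} := eq_of_subset_of_card_le hNy
    (by rw [← indDeg_eq_card_nbrsIn, hreg y hys]; exact card_le_two)
  have hyw := (mem_nbrsIn.1 (hNy' ▸ (by simp) : w ∈ nbrsIn G s y)).2
  have hyx := (mem_nbrsIn.1 (hNy' ▸ (by simp) : x ∈ nbrsIn G s y)).2
  exact not_fiveCycle_of_proper hc hu hv.1 hw.1 hx.1 hys
    ⟨hv.2, hx.2, hyx.symm, hyw, hw.2.symm⟩

theorem exists_isCheapCut_of_indDeg_eq_two {c : V → Fin 2} {s : Finset V}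
    (hc : ∀ a ∈ s, ∀ b ∈ s, G.Adj a b → c a ≠ c b) (hreg : ∀ v ∈ s, indDeg G s v = 2) {u : V}
    (hu : u ∈ s) : ∃ v D, IsCheapCut G s D u v := by
  obtain ⟨v, hv⟩ : (nbrsIn G s u).Nonempty :=
    card_pos.1 (by rw [← indDeg_eq_card_nbrsIn, hreg u hu]; norm_num)
  obtain ⟨w, hNu⟩ := exists_nbrsIn_eq_pair (hreg u hu) hv
  have huv := mem_nbrsIn.1 hv
  obtain ⟨x, hNv⟩ := exists_nbrsIn_eq_pair (hreg v huv.1) (mem_nbrsIn.2 ⟨hu, huv.2.symm⟩)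
  refine ⟨v, {u, v, w, x}, huv.2, hu, huv.1, ?_, ?_, ?_⟩
  · simp [hNu, insert_subset_iff]
  · simp [hNv, insert_subset_iff]
  · rw [isolatedIn_sdiff_eq_empty_of_indDeg_eq_two hc hreg hu hNu hNv, card_empty]
    exact card_le_four

theorem InducesPathsAndEvenCycles.exists_isCheapCut {c : V → Fin 2} {s : Finset V}
    (h : InducesPathsAndEvenCycles G c s) (hne : s.Nonempty) : ∃ u v D, IsCheapCut G s D u v := by
  by_cases hleaf : ∃ u ∈ s, indDeg G s u = 1
  · obtain ⟨u, hu, hu1⟩ := hleaf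
    exact ⟨u, exists_isCheapCut_of_indDeg_eq_one h.indDeg_le_two h.exists_adj hu hu1⟩
  · obtain ⟨u, hu⟩ := hne
    refine ⟨u, exists_isCheapCut_of_indDeg_eq_two h.proper (fun v hv => ?_) hu⟩
    obtain ⟨w, hw⟩ := h.exists_adj v hv
    have : 0 < indDeg G s v := card_pos.2 ⟨w, mem_nbrsIn.2 hw⟩
    have := h.indDeg_le_two v hv
    have : indDeg G s v ≠ 1 := fun h1 => hleaf ⟨v, hv, h1⟩
    omega

theorem InducesPathsAndEvenCycles.exists_isInducedMatching {c : V → Fin 2} {s : Finset V}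
    (h : InducesPathsAndEvenCycles G c s) :
    ∃ t ⊆ s, IsInducedMatching G t ∧ s.card ≤ 2 * t.card := by
  induction s using Finset.strongInduction with
  | H s ih =>
  rcases s.eq_empty_or_nonempty with rfl | hne
  · exact ⟨∅, empty_subset _, fun _ h => absurd h (notMem_empty _), by simp⟩
  obtain ⟨u, v, D, hcut⟩ := h.exists_isCheapCut hne
  have hrs : nonIsolatedIn G (s \ D) ⊆ s \ D := nonIsolatedIn_subset _
  have hur : u ∉ nonIsolatedIn G (s \ D) := fun hu => (mem_sdiff.1 (hrs hu)).2
    (hcut.nbrsIn_right_subset (mem_nbrsIn.2 ⟨hcut.left_mem, hcut.adj.symm⟩))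
  have hssub : nonIsolatedIn G (s \ D) ⊂ s :=
    (ssubset_iff_of_subset (hrs.trans sdiff_subset)).2 ⟨u, hcut.left_mem, hur⟩
  obtain ⟨t, hts, ht, hcard⟩ := ih _ hssub (h.nonIsolatedIn_of_subset sdiff_subset)
  have hsep : ∀ y ∈ t, ¬G.Adj y u ∧ ¬G.Adj y v := by
    intro y hy
    obtain ⟨hys, hyD⟩ := mem_sdiff.1 (hrs (hts hy))
    exact ⟨fun hyu => hyD (hcut.nbrsIn_left_subset (mem_nbrsIn.2 ⟨hys, hyu.symm⟩)),
      fun hyv => hyD (hcut.nbrsIn_right_subset (mem_nbrsIn.2 ⟨hys, hyv.symm⟩))⟩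
  refine ⟨insert u (insert v t), ?_, ht.insert_edge hcut.adj hsep, ?_⟩
  · exact insert_subset hcut.left_mem
      (insert_subset hcut.right_mem (hts.trans (hrs.trans sdiff_subset)))
  · rw [card_insert_insert_of_adj hcut.adj hsep]
    have := card_le_card_sdiff_add_card (s := s) (t := D)
    have := card_nonIsolatedIn_add_card_isolatedIn (G := G) (s \ D)
    have := hcut.card_le
    omega

theorem exists_fin_two_coloring_of_colorable_induce {s : Finset V}
    (h : (G.induce (s : Set V)).Colorable 2) :
    ∃ c : V → Fin 2, ∀ a ∈ s, ∀ b ∈ s, G.Adj a b → c a ≠ c b := by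
  obtain ⟨C⟩ := h
  refine ⟨fun v => if hv : v ∈ s then C ⟨v, hv⟩ else 0, fun a ha b hb hab => ?_⟩
  simpa [ha, hb] using C.valid (show (G.induce (s : Set V)).Adj ⟨a, ha⟩ ⟨b, hb⟩ from hab)

theorem IsOddSet.card_le_fo_s14 [Fintype V] {t : Finset V} (ht : IsOddSet G t) : t.card ≤ fo G :=
  le_csSup ⟨Fintype.card V, by rintro n ⟨s, -, rfl⟩; exact card_le_univ s⟩ ⟨t, ht, rfl⟩

end

/-- Assuming Scott's weighted lemma, every claw-free graph `G` without isolated vertices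
satisfies `f_o(G) ≥ |V(G)|/χ(G)`. -/
theorem stmt_14
    (scott : ∀ (W : Type) [Fintype W] (G : SimpleGraph W),
      (∀ v, ∃ w, G.Adj v w) →
      ∀ k m : ℕ, G.chromaticNumber = k → 2 ≤ m → m ≤ k →
        ∃ s : Finset W, (G.induce (↑s : Set W)).chromaticNumber = m ∧
          (∀ v ∈ s, ∃ w ∈ s, G.Adj v w) ∧
          m * Fintype.card W ≤ k * s.card)
    {V : Type} [Fintype V] (G : SimpleGraph V)
    (hclaw : IsEmpty (completeBipartiteGraph (Fin 1) (Fin 3) ↪g G))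
    (hiso : ∀ v, ∃ w, G.Adj v w)
    (k : ℕ) (hk : G.chromaticNumber = k) :
    Fintype.card V ≤ k * fo G := by
  rcases isEmpty_or_nonempty V with _ | ⟨⟨v⟩⟩
  · simp [Fintype.card_eq_zero]
  obtain ⟨w, hvw⟩ := hiso v
  have hk2 : 2 ≤ k := by exact_mod_cast hk ▸ G.two_le_chromaticNumber_of_adj hvw
  obtain ⟨s, hχ, hs_adj, hs_card⟩ := scott V G hiso k 2 hk le_rfl hk2
  obtain ⟨c, hc⟩ := exists_fin_two_coloring_of_colorable_induce
    (SimpleGraph.chromaticNumber_le_iff_colorable.1 hχ.le)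
  have hs : InducesPathsAndEvenCycles G c s :=
    ⟨hc, fun _ hv => indDeg_le_two_of_isEmpty_claw hclaw hc hv, hs_adj⟩
  obtain ⟨t, -, ht, hst⟩ := hs.exists_isInducedMatching
  have : 2 * Fintype.card V ≤ 2 * (k * fo G) :=
    calc 2 * Fintype.card V ≤ k * s.card := hs_card
      _ ≤ k * (2 * t.card) := Nat.mul_le_mul_left k hst
      _ ≤ k * (2 * fo G) := by gcongr; exact ht.isOddSet.card_le_fo_s14
      _ = 2 * (k * fo G) := by ring
  omega
end

section
/- The line graph of the 5-cycle C_5 is isomorphic to C_5, and f_o(L(C_5)) = 2 < 5/2. Hence C_5 is a counterexample to the statement that f_o(L(G)) ≥ n/2 for every connected regular graph G of order n ≥ 3. -/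
instance decLineAdj : DecidableRel (SimpleGraph.cycleGraph 5).lineGraph.Adj := fun _ _ =>
  decidable_of_iff _ SimpleGraph.lineGraph_adj_iff_exists.symm

lemma indDeg_eq {V : Type*} (G : SimpleGraph V) [DecidableRel G.Adj] (s : Finset V) (v : V) :
    indDeg G s v = (s.filter (fun w => G.Adj v w)).card := by
  unfold indDeg
  congr 1
  exact Finset.filter_congr_decidable ..

lemma oddset_card_le : ∀ s : Finset (SimpleGraph.cycleGraph 5).edgeSet,
    (∀ v ∈ s, Odd ((s.filter (fun w => (SimpleGraph.cycleGraph 5).lineGraph.Adj v w)).card)) →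
    s.card ≤ 2 := by decide

def f5 : Fin 5 → (SimpleGraph.cycleGraph 5).edgeSet := fun i =>
  ⟨s(i, i + 1), by rw [SimpleGraph.mem_edgeSet, SimpleGraph.cycleGraph_adj]; simp⟩

lemma f5_bij : Function.Bijective f5 := by decide

lemma f5_adj : ∀ a b : Fin 5, (SimpleGraph.cycleGraph 5).lineGraph.Adj (f5 a) (f5 b) ↔
    (SimpleGraph.cycleGraph 5).Adj a b := by decide

noncomputable def iso5 : (SimpleGraph.cycleGraph 5).lineGraph ≃g SimpleGraph.cycleGraph 5 :=
  ⟨(Equiv.ofBijective f5 f5_bij).symm, by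
    intro a b
    set e := Equiv.ofBijective f5 f5_bij with he
    have h := f5_adj (e.symm a) (e.symm b)
    have hf : ∀ x, f5 (e.symm x) = x := fun x => e.apply_symm_apply x
    rw [hf, hf] at h
    exact h.symm⟩

lemma isOddSet_iff (s : Finset (SimpleGraph.cycleGraph 5).edgeSet) :
    IsOddSet (SimpleGraph.cycleGraph 5).lineGraph s ↔
    ∀ v ∈ s, Odd ((s.filter (fun w => (SimpleGraph.cycleGraph 5).lineGraph.Adj v w)).card) := by
  unfold IsOddSet
  simp_rw [indDeg_eq]

lemma fo_line : fo (SimpleGraph.cycleGraph 5).lineGraph = 2 := by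
  have h2 : (2 : ℕ) ∈ {n | ∃ s : Finset (SimpleGraph.cycleGraph 5).edgeSet,
      IsOddSet (SimpleGraph.cycleGraph 5).lineGraph s ∧ s.card = n} := by
    refine ⟨{f5 0, f5 1}, (isOddSet_iff _).mpr (by decide), by decide⟩
  have hub : ∀ n ∈ {n | ∃ s : Finset (SimpleGraph.cycleGraph 5).edgeSet,
      IsOddSet (SimpleGraph.cycleGraph 5).lineGraph s ∧ s.card = n}, n ≤ 2 := by
    rintro n ⟨s, hs, rfl⟩
    exact oddset_card_le s ((isOddSet_iff s).mp hs)
  exact le_antisymm (csSup_le ⟨2, h2⟩ hub) (le_csSup ⟨2, hub⟩ h2)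

/-- `L(C₅) ≅ C₅` and `f_o(L(C₅)) = 2 < 5/2`, so `C₅` is a counterexample to the
problem of Wang and Wu. -/
theorem stmt_16 :
    Nonempty ((SimpleGraph.cycleGraph 5).lineGraph ≃g SimpleGraph.cycleGraph 5) ∧
    fo (SimpleGraph.cycleGraph 5).lineGraph = 2 ∧
    ((fo (SimpleGraph.cycleGraph 5).lineGraph : ℚ) < 5 / 2) := by
  refine ⟨⟨iso5⟩, fo_line, ?_⟩
  rw [fo_line]
  norm_num
end
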